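/- arXiv:1906.06658 — 5 statements merged into one kernel-verified Lean document; each statement's English description precedes it below -/
import Mathlib

section
/- For the metric in the frame above, the curvature tensor satisfies $R(U,\mathbf{T})V=g(U,V)\mathbf{T}-g(\mathbf{T},V)U$ for all $U,V$ in the span of $\{\mathbf{X},\mathbf{Y},\mathbf{T}\}$ (the Sasakian curvature identity). -/
/-!
The Koszul formula determines `∇_v u` completely, because `gmet` is nondegenerate; in the
orthonormal frame its solution is bilinear with explicit coefficients (`leviCivita`). With the
connection known, `R(u, T)v` is a polynomial identity in the coordinates of `u` and `v`.
-/

def gmet (u v : Fin 3 → ℝ) : ℝ := u 0 * v 0 + u 1 * v 1 + u 2 * v 2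

def lieBr (u v : Fin 3 → ℝ) : Fin 3 → ℝ :=
  ![0, 2 * (u 0 * v 1 - u 1 * v 0), -2 * (u 0 * v 1 - u 1 * v 0)]

def eT : Fin 3 → ℝ := ![0, 0, 1]

/-- The curvature tensor `R(X,Y)Z = ∇_Y∇_X Z - ∇_X∇_Y Z + ∇_{[X,Y]} Z`. -/
def curv (nab : (Fin 3 → ℝ) → (Fin 3 → ℝ) → (Fin 3 → ℝ))
    (u v w : Fin 3 → ℝ) : Fin 3 → ℝ :=
  nab v (nab u w) - nab u (nab v w) + nab (lieBr u v) w

theorem gmet_single_left (i : Fin 3) (w : Fin 3 → ℝ) : gmet (Pi.single i 1) w = w i := by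
  fin_cases i <;> simp [gmet]

theorem eq_of_forall_gmet_eq {a b : Fin 3 → ℝ} (h : ∀ w, gmet w a = gmet w b) : a = b := by
  funext i
  simpa only [gmet_single_left] using h (Pi.single i 1)

/-- `leviCivita v u` is `∇_v u`. -/
def leviCivita (v u : Fin 3 → ℝ) : Fin 3 → ℝ :=
  ![2 * u 1 * v 1 - u 1 * v 2 - u 2 * v 1,
    -2 * u 0 * v 1 + u 0 * v 2 + u 2 * v 0,
    u 0 * v 1 - u 1 * v 0]

theorem koszul_leviCivita (u v w : Fin 3 → ℝ) :
    -2 * gmet w (leviCivita v u) =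
      gmet (lieBr u w) v + gmet (lieBr v w) u + gmet (lieBr u v) w := by
  simp only [gmet, lieBr, leviCivita, Matrix.cons_val_zero, Matrix.cons_val_one,
    Matrix.cons_val_two, Matrix.head_cons, Matrix.tail_cons]
  ring

theorem eq_leviCivita_of_koszul {nab : (Fin 3 → ℝ) → (Fin 3 → ℝ) → (Fin 3 → ℝ)}
    (hK : ∀ u v w : Fin 3 → ℝ,
      -2 * gmet w (nab v u) = gmet (lieBr u w) v + gmet (lieBr v w) u + gmet (lieBr u v) w) :
    nab = leviCivita := by
  funext v u
  refine eq_of_forall_gmet_eq fun w => ?_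
  have h := (hK u v w).trans (koszul_leviCivita u v w).symm
  linarith

theorem curv_leviCivita_eT (u v : Fin 3 → ℝ) :
    curv leviCivita u eT v = gmet u v • eT - gmet eT v • u := by
  funext k
  fin_cases k <;>
    simp only [curv, leviCivita, gmet, lieBr, eT, Pi.add_apply, Pi.sub_apply, Pi.smul_apply,
      smul_eq_mul, Fin.zero_eta, Fin.mk_one, Fin.reduceFinMk, Matrix.cons_val_zero,
      Matrix.cons_val_one, Matrix.cons_val_two, Matrix.head_cons, Matrix.tail_cons] <;> ring

/-- The Sasakian curvature identity `R(U,T)V = g(U,V)T - g(T,V)U` for all `U, V`. -/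
theorem sasakian_curvature_identity
    (nab : (Fin 3 → ℝ) → (Fin 3 → ℝ) → (Fin 3 → ℝ))
    (hK : ∀ u v w : Fin 3 → ℝ,
      -2 * gmet w (nab v u) = gmet (lieBr u w) v + gmet (lieBr v w) u + gmet (lieBr u v) w) :
    ∀ u v : Fin 3 → ℝ,
      curv nab u eT v = gmet u v • eT - gmet eT v • u := by
  rw [eq_leviCivita_of_koszul hK]
  exact curv_leviCivita_eT
end

section
/- Let $a\in(-\pi/2,\pi/2)$, $z\in\mathbb{C}_*$, $t\in\mathbb{R}$, $u=-|z|^2+it$, and suppose $u-1-i\tan a+2z\neq 0$. Set $\mathbb{X}_1=\frac{-1-i\tan a}{u-1-i\tan a+2z}$, $\mathbb{X}_2=\frac{u}{u-1-i\tan a+2z}$. Then $|\mathbb{X}_1+\mathbb{X}_2-1|^2=2\Re\left(\mathbb{X}_1\overline{\mathbb{X}_2}(1+e^{-2ia})\right)$. -/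
open Complex ComplexConjugate

/-- The relation `|𝕏₁ + 𝕏₂ - 1|² = 2Re(𝕏₁ 𝕏̄₂ (1 + e^{-2ia}))` defining the
cross-ratio variety, for the cross-ratios of a normalized quadruple. -/
theorem cross_ratio_variety_equation
    (a : ℝ) (ha : a ∈ Set.Ioo (-(Real.pi / 2)) (Real.pi / 2))
    (z : ℂ) (hz : z ≠ 0) (t : ℝ)
    (u : ℂ) (hu : u = -((‖z‖ : ℝ) : ℂ) ^ 2 + (t : ℂ) * I)
    (hden : u - 1 - (Real.tan a : ℂ) * I + 2 * z ≠ 0)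
    (X1 X2 : ℂ)
    (hX1 : X1 = (-1 - I * (Real.tan a : ℂ)) / (u - 1 - I * (Real.tan a : ℂ) + 2 * z))
    (hX2 : X2 = u / (u - 1 - I * (Real.tan a : ℂ) + 2 * z)) :
    (‖X1 + X2 - 1‖) ^ 2
      = 2 * (X1 * conj X2 * (1 + Complex.exp (-2 * (a : ℂ) * I))).re := by
  have hc : Real.cos a ≠ 0 := (Real.cos_pos_of_mem_Ioo ha).ne'
  have hcc : Complex.cos (a : ℂ) ≠ 0 := by
    rw [← Complex.ofReal_cos]
    exact_mod_cast hc
  have hT : (Real.tan a : ℂ) = Complex.sin a / Complex.cos a := by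
    rw [Complex.ofReal_tan, Complex.tan_eq_sin_div_cos]
  set T : ℂ := (Real.tan a : ℂ) with hTdef
  have hE : Complex.exp (-2 * (a : ℂ) * I) = (Complex.cos a - Complex.sin a * I) ^ 2 := by
    have h2 : (-2 : ℂ) * a * I = (-(a : ℂ)) * I + (-(a : ℂ)) * I := by ring
    rw [h2, Complex.exp_add, Complex.exp_mul_I, Complex.cos_neg, Complex.sin_neg]
    ring
  set E : ℂ := Complex.exp (-2 * (a : ℂ) * I) with hEdef
  have hs := Complex.sin_sq_add_cos_sq (a : ℂ)
  have key : (-1 - I * T) * (1 + E) = -2 := by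
    rw [hT, hE]
    field_simp
    linear_combination (I * Complex.sin (a:ℂ) - Complex.cos (a:ℂ)) * hs +
      (Complex.cos (a:ℂ) * Complex.sin (a:ℂ)^2 - I * Complex.sin (a:ℂ)^3) * Complex.I_sq
  set D : ℂ := u - 1 - I * T + 2 * z with hD
  have hD0 : D ≠ 0 := by
    rw [hD]
    convert hden using 1
    ring
  have hDc : conj D ≠ 0 := by
    simpa using hD0
  have hsum : X1 + X2 - 1 = -2 * z / D := by
    rw [hX1, hX2]
    field_simp
    ring
  have hW : X1 * conj X2 * (1 + E) = -2 * conj u / (D * conj D) := by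
    rw [hX1, hX2, map_div₀]
    field_simp
    linear_combination (conj u) * key
  have huu : u + conj u = -2 * (z * conj z) := by
    rw [hu, Complex.mul_conj]
    simp only [map_add, map_neg, map_pow, map_mul, Complex.conj_ofReal, Complex.conj_I,
      Complex.sq_norm]
    push_cast [Complex.normSq_eq_norm_sq]
    ring
  have main : (X1 + X2 - 1) * conj (X1 + X2 - 1)
      = X1 * conj X2 * (1 + E) + conj (X1 * conj X2 * (1 + E)) := by
    rw [hW, hsum, map_div₀, map_div₀]
    simp only [map_mul, map_neg, map_ofNat, Complex.conj_conj]
    rw [mul_comm (conj D) D, ← add_div]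
    rw [div_mul_div_comm]
    congr 1
    linear_combination 2 * huu
  have habs : (‖X1 + X2 - 1‖) ^ 2 = ((X1 + X2 - 1) * conj (X1 + X2 - 1)).re := by
    rw [Complex.mul_conj, Complex.ofReal_re, Complex.sq_norm]
  rw [habs, main, Complex.add_conj]
  simp only [Complex.mul_re, Complex.ofReal_re, Complex.ofReal_im, Complex.re_ofNat,
    Complex.im_ofNat]
end

section
/- With $\mathbb{X}_1,\mathbb{X}_2$ as defined from $(z,t,a)$ as above, one has $\Re\left(\mathbb{X}_1\overline{\mathbb{X}_2}e^{-ia}\right)=\frac{|z|^2}{\cos a\,|u+2z-1-i\tan a|^2}>0$, where $u=-|z|^2+it$. -/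
open Complex ComplexConjugate

/-- `Re(𝕏₁ 𝕏̄₂ e^{-ia}) = |z|²/(cos a · |u + 2z - 1 - i tan a|²) > 0`. -/
theorem cross_ratio_positivity
    (a : ℝ) (ha : a ∈ Set.Ioo (-(Real.pi / 2)) (Real.pi / 2))
    (z : ℂ) (hz : z ≠ 0) (t : ℝ)
    (u : ℂ) (hu : u = -((‖z‖ : ℝ) : ℂ) ^ 2 + (t : ℂ) * I)
    (hden : u + 2 * z - 1 - (Real.tan a : ℂ) * I ≠ 0)
    (X1 X2 : ℂ)
    (hX1 : X1 = (-1 - I * (Real.tan a : ℂ)) / (u - 1 - I * (Real.tan a : ℂ) + 2 * z))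
    (hX2 : X2 = u / (u - 1 - I * (Real.tan a : ℂ) + 2 * z)) :
    (X1 * conj X2 * Complex.exp (-(a : ℂ) * I)).re
        = (‖z‖) ^ 2
          / (Real.cos a * (‖u + 2 * z - 1 - (Real.tan a : ℂ) * I‖) ^ 2) ∧
    0 < (X1 * conj X2 * Complex.exp (-(a : ℂ) * I)).re := by
  obtain ⟨ha1, ha2⟩ := ha
  have hc : 0 < Real.cos a := Real.cos_pos_of_mem_Ioo ⟨ha1, ha2⟩
  set D : ℂ := u - 1 - I * (Real.tan a : ℂ) + 2 * z with hD
  have hDne : D ≠ 0 := by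
    intro h; apply hden
    rw [show u + 2 * z - 1 - (Real.tan a : ℂ) * I = D by rw [hD]; ring, h]
  have hconjD : conj D ≠ 0 := by simpa using hDne
  have hcne : (Real.cos a : ℂ) ≠ 0 := by exact_mod_cast hc.ne'
  have hexp : Complex.exp (-(a : ℂ) * I) = (Real.cos a : ℂ) - (Real.sin a : ℂ) * I := by
    rw [Complex.exp_mul_I, Complex.cos_neg, Complex.sin_neg, Complex.ofReal_cos,
      Complex.ofReal_sin]
    ring
  have htan : (Real.tan a : ℂ) = (Real.sin a : ℂ) / (Real.cos a : ℂ) := by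
    rw [Real.tan_eq_sin_div_cos]; push_cast; ring
  have hpyth : (Real.sin a : ℂ) ^ 2 + (Real.cos a : ℂ) ^ 2 = 1 := by
    exact_mod_cast Real.sin_sq_add_cos_sq a
  have hNS : ((Complex.normSq D : ℝ) : ℂ) = D * conj D := (Complex.mul_conj D).symm
  have hmul : Complex.exp ((a : ℂ) * I) * Complex.exp (-(a : ℂ) * I) = 1 := by
    rw [← Complex.exp_add, show (a : ℂ) * I + -(a : ℂ) * I = 0 by ring, Complex.exp_zero]
  have hnum : (-1 - I * (Real.tan a : ℂ)) * Complex.exp (-(a : ℂ) * I) * (Real.cos a : ℂ)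
      = -1 := by
    have h2 : (-1 - I * (Real.tan a : ℂ)) * (Real.cos a : ℂ)
        = -Complex.exp ((a : ℂ) * I) := by
      have h3 : Complex.cos (a : ℂ) ≠ 0 := by
        rw [← Complex.ofReal_cos]; exact_mod_cast hc.ne'
      rw [htan, Complex.exp_mul_I, ← Complex.ofReal_cos, ← Complex.ofReal_sin]
      field_simp
      ring
    linear_combination (Complex.exp (-(a : ℂ) * I)) * h2 - hmul
  clear_value D
  have key : X1 * conj X2 * Complex.exp (-(a : ℂ) * I)
      = (-(conj u)) / (((Real.cos a * Complex.normSq D : ℝ)) : ℂ) := by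
    have hnum' : (-1 - I * (Real.tan a : ℂ)) * Complex.exp (-(a : ℂ) * I)
        = -1 / (Real.cos a : ℂ) := eq_div_of_mul_eq hcne hnum
    rw [hX1, hX2, map_div₀, Complex.ofReal_mul, hNS, div_mul_div_comm,
      div_mul_eq_mul_div,
      show (-1 - I * (Real.tan a : ℂ)) * conj u * Complex.exp (-(a : ℂ) * I)
        = ((-1 - I * (Real.tan a : ℂ)) * Complex.exp (-(a : ℂ) * I)) * conj u by ring,
      hnum']
    field_simp
  have hre : (X1 * conj X2 * Complex.exp (-(a : ℂ) * I)).re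
      = (-(conj u)).re / (Real.cos a * Complex.normSq D) := by
    rw [key, Complex.div_ofReal_re]
  have hure : u.re = -(‖z‖) ^ 2 := by rw [hu]; simp [← Complex.ofReal_pow]
  have habs : (‖u + 2 * z - 1 - (Real.tan a : ℂ) * I‖) ^ 2 = Complex.normSq D := by
    rw [show u + 2 * z - 1 - (Real.tan a : ℂ) * I = D by rw [hD]; ring, Complex.sq_norm]
  have hval : (X1 * conj X2 * Complex.exp (-(a : ℂ) * I)).re
      = (‖z‖) ^ 2
        / (Real.cos a * (‖u + 2 * z - 1 - (Real.tan a : ℂ) * I‖) ^ 2) := by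
    rw [hre, habs]
    simp only [neg_re, Complex.conj_re, hure, neg_neg]
  refine ⟨hval, ?_⟩
  rw [hval]
  have hzpos : 0 < (‖z‖) ^ 2 := pow_pos (norm_pos_iff.mpr hz) 2
  have hnspos : 0 < Complex.normSq D := Complex.normSq_pos.mpr hDne
  rw [habs]
  exact div_pos hzpos (mul_pos hc hnspos)
end

section
/- Define $\mathfrak{V}_4\subset\mathbb{C}^2\times(-\pi/2,\pi/2)$ as the set of $(w_1,w_2,a)$ with $|w_1+w_2-1|^2=2\Re(w_1\overline{w_2}(1+e^{-2ia}))$, $w_1+w_2\neq1$, $\Re(w_1\overline{w_2}e^{-ia})>0$, and $\arg(w_1/w_2)\neq2a$. For $(w_1,w_2,a)\in\mathfrak{V}_4$, setting $z=\frac{w_1+w_2-1}{(1+e^{-2ia})w_1}$, $t=-2\Im\left(\frac{w_2}{(1+e^{-2ia})w_1}\right)$, and $u=-|z|^2+it$, one recovers $\frac{-1-i\tan a}{u-1-i\tan a+2z}=w_1$ and $\frac{u}{u-1-i\tan a+2z}=w_2$. -/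
open Complex ComplexConjugate

lemma variety_aux (d cd w2 cw2 W cW u : ℂ) (hd : d ≠ 0) (hdc : cd ≠ 0)
    (heq : W * cW = w2 * cd + cw2 * d)
    (hu : u = -(W / d * (cW / cd)) + (cw2 / cd - w2 / d)) : u = -2 * w2 / d := by
  rw [hu]
  field_simp
  linear_combination (-1) * heq

/-- For a point `(w₁, w₂, a)` of the variety `𝔙₄`, setting
`z = (w₁+w₂-1)/((1+e^{-2ia})w₁)`, `t = -2 Im(w₂/((1+e^{-2ia})w₁))`, `u = -|z|²+it`,
one recovers `w₁` and `w₂` as the cross-ratios of the corresponding quadruple. -/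
theorem variety_point_recovered
    (a : ℝ) (ha : a ∈ Set.Ioo (-(Real.pi / 2)) (Real.pi / 2))
    (w1 w2 : ℂ) (hw1 : w1 ≠ 0)
    (heq : ‖w1 + w2 - 1‖ ^ 2
      = 2 * (w1 * conj w2 * (1 + Complex.exp (-2 * (a : ℂ) * I))).re)
    (hne : w1 + w2 ≠ 1)
    (hpos : 0 < (w1 * conj w2 * Complex.exp (-(a : ℂ) * I)).re)
    (harg : (w1 / w2).arg ≠ 2 * a)
    (z : ℂ) (hz : z = (w1 + w2 - 1) / ((1 + Complex.exp (-2 * (a : ℂ) * I)) * w1))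
    (t : ℝ) (ht : t = -2 * (w2 / ((1 + Complex.exp (-2 * (a : ℂ) * I)) * w1)).im)
    (u : ℂ) (hu : u = -((‖z‖ : ℝ) : ℂ) ^ 2 + (t : ℂ) * I) :
    (-1 - I * (Real.tan a : ℂ)) / (u - 1 - I * (Real.tan a : ℂ) + 2 * z) = w1 ∧
    u / (u - 1 - I * (Real.tan a : ℂ) + 2 * z) = w2 := by
  have hca : 0 < Real.cos a := Real.cos_pos_of_mem_Ioo ha
  set E : ℂ := Complex.exp (-2 * (a : ℂ) * I) with hE
  have hE2 : E = (↑(Real.cos (2*a)) : ℂ) - ↑(Real.sin (2*a)) * I := by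
    have h1 : -2 * (a : ℂ) * I = (↑(-(2*a)) : ℂ) * I := by push_cast; ring
    rw [hE, h1, Complex.exp_mul_I, ← Complex.ofReal_cos, ← Complex.ofReal_sin,
      Real.cos_neg, Real.sin_neg]
    push_cast
    ring
  have hq : (1 : ℂ) + E ≠ 0 := by
    intro h
    have hre : ((1:ℂ) + E).re = 1 + Real.cos (2*a) := by
      rw [hE2]
      simp only [Complex.add_re, Complex.sub_re, Complex.one_re, Complex.ofReal_re,
        Complex.mul_re, Complex.ofReal_im, Complex.I_re, Complex.I_im]
      ring
    rw [h] at hre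
    simp at hre
    nlinarith [Real.cos_two_mul a]
  have hcne : ((Real.cos a : ℝ) : ℂ) ≠ 0 := Complex.ofReal_ne_zero.mpr (ne_of_gt hca)
  have hpyth : ((Real.sin a : ℝ) : ℂ)^2 + ((Real.cos a : ℝ) : ℂ)^2 = 1 := by
    rw [← Complex.ofReal_pow, ← Complex.ofReal_pow, ← Complex.ofReal_add,
      Real.sin_sq_add_cos_sq, Complex.ofReal_one]
  have htan : ((1 : ℂ) + I * (Real.tan a : ℂ)) * (1 + E) = 2 := by
    rw [hE2, Real.tan_eq_sin_div_cos, Real.cos_two_mul, Real.sin_two_mul]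
    simp only [Complex.ofReal_sub, Complex.ofReal_mul, Complex.ofReal_pow,
      Complex.ofReal_one, Complex.ofReal_div, Complex.ofReal_ofNat]
    set cc : ℂ := ((Real.cos a : ℝ) : ℂ) with hcc
    set ss : ℂ := ((Real.sin a : ℝ) : ℂ) with hss
    have hcne' : cc ≠ 0 := hcne
    field_simp
    linear_combination (2 * cc - 2 * I * ss + 2*I*ss) * hpyth
      + (2*ss^2 - 2*I*ss*cc + 2*cc*ss^2 + 2*I*ss^3
         + 2*cc*I*ss - 4*cc*ss^2 - 2*ss^2 - 2*I*ss^3) * Complex.I_sq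
  set W : ℂ := w1 + w2 - 1 with hW
  set X : ℂ := w1 * conj w2 * (1 + E) with hX
  have heqC : W * conj W = X + conj X := by
    have h1 : ((‖W‖ : ℝ) : ℂ) ^ 2 = W * conj W := by
      rw [← Complex.ofReal_pow, Complex.sq_norm, Complex.mul_conj]
    have h2 : ((2 * X.re : ℝ) : ℂ) = X + conj X := by
      push_cast
      rw [Complex.add_conj]
      push_cast; ring
    rw [← h1, ← h2]
    exact_mod_cast congrArg (Complex.ofReal) heq
  have hqw : ((1 : ℂ) + E) * w1 ≠ 0 := mul_ne_zero hq hw1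
  have hqc : conj ((1 : ℂ) + E) ≠ 0 := by
    rw [← Complex.star_def]; exact star_ne_zero.mpr hq
  have hw1c : conj w1 ≠ 0 := by
    rw [← Complex.star_def]; exact star_ne_zero.mpr hw1
  have hu2 : u = -2 * w2 / ((1 + E) * w1) := by
    have habs : ((‖z‖ : ℝ) : ℂ) ^ 2 = z * conj z := by
      rw [← Complex.ofReal_pow, Complex.sq_norm, Complex.mul_conj]
    have him : ((t : ℝ) : ℂ) * I
        = -((w2 / ((1 + E) * w1)) - conj (w2 / ((1 + E) * w1))) := by
      rw [ht]
      push_cast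
      rw [Complex.sub_conj]
      push_cast; ring
    have heqC' : W * conj W = w2 * conj ((1+E)*w1) + conj w2 * ((1+E)*w1) := by
      rw [heqC, hX]
      simp only [map_mul, map_add, map_one, Complex.conj_conj]
      ring
    have hdc : conj ((1+E)*w1) ≠ 0 := by
      rw [← Complex.star_def]; exact star_ne_zero.mpr hqw
    refine variety_aux ((1 + E) * w1) (conj ((1 + E) * w1)) w2 (conj w2) W (conj W) u
      hqw hdc ?_ ?_
    · exact heqC'
    · rw [hu, habs, him, hz]
      simp only [map_div₀]
      ring
  set T : ℂ := ((Real.tan a : ℝ) : ℂ) with hT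
  have hD : u - 1 - I * T + 2 * z = -2 / ((1 + E) * w1) := by
    rw [hu2, hz]
    field_simp
    linear_combination (-w1) * htan
  refine ⟨?_, ?_⟩
  · rw [hD]
    have hn : (-1 : ℂ) - I * T = -2 / (1 + E) := by
      rw [eq_div_iff hq]
      linear_combination -htan
    rw [hn]
    field_simp
  · rw [hD, hu2]
    field_simp
end

section
/- The map $F(z,t,r)=\left(z,\ \frac{|z|^2-it}{1-i\log r}\right)$ is a bijection from $\{(z,t,r)\in\mathbb{C}_*\times\mathbb{R}\times\mathbb{R}_{>0}:\log r\neq t/|z|^2\}$ onto $\mathbb{C}_*\times(\mathbb{C}\setminus\mathbb{R})$, with inverse $F^{-1}(\zeta,w)=\left(\zeta,\ \frac{\Re(w)|\zeta|^2-|w|^2}{\Im(w)},\ e^{\frac{|\zeta|^2-\Re(w)}{\Im(w)}}\right)$. -/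
open Complex

/-- `F(z,t,r) = (z, (|z|² - it)/(1 - i log r))`. -/
noncomputable def Fmap (p : ℂ × ℝ × ℝ) : ℂ × ℂ :=
  (p.1, (((‖p.1‖ : ℝ) : ℂ) ^ 2 - (p.2.1 : ℂ) * I)
    / (1 - ((Real.log p.2.2 : ℝ) : ℂ) * I))

/-- `F⁻¹(ζ,w) = (ζ, (Re(w)|ζ|² - |w|²)/Im(w), e^{(|ζ|² - Re(w))/Im(w)})`. -/
noncomputable def FmapInv (q : ℂ × ℂ) : ℂ × ℝ × ℝ :=
  (q.1,
    (q.2.re * (‖q.1‖) ^ 2 - (‖q.2‖) ^ 2) / q.2.im,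
    Real.exp (((‖q.1‖) ^ 2 - q.2.re) / q.2.im))

/-- The domain `{(z,t,r) : z ≠ 0, r > 0, log r ≠ t/|z|²}`. -/
noncomputable def Fdom : Set (ℂ × ℝ × ℝ) :=
  {p | p.1 ≠ 0 ∧ 0 < p.2.2 ∧ Real.log p.2.2 ≠ p.2.1 / (‖p.1‖) ^ 2}

/-- The target `ℂ* × (ℂ \ ℝ)`. -/
def Ftarget : Set (ℂ × ℂ) := {q | q.1 ≠ 0 ∧ q.2.im ≠ 0}


lemma w_re' (a t L : ℝ) : (((a:ℂ) - (t:ℂ)*I)/(1 - (L:ℂ)*I)).re = (a + t*L)/(1+L^2) := by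
  simp [Complex.div_re, Complex.normSq_apply]; ring_nf

lemma w_im' (a t L : ℝ) : (((a:ℂ) - (t:ℂ)*I)/(1 - (L:ℂ)*I)).im = (a*L - t)/(1+L^2) := by
  simp [Complex.div_im, Complex.normSq_apply]; ring_nf

lemma w_abs' (a t L : ℝ) : (‖(((a:ℂ) - (t:ℂ)*I))/(1 - (L:ℂ)*I)‖)^2 = (a^2+t^2)/(1+L^2) := by
  rw [← Complex.normSq_eq_norm_sq, Complex.normSq_div]
  simp [Complex.normSq_apply]; ring_nf

lemma denom_ne (L : ℝ) : (1:ℂ) - (L:ℂ)*I ≠ 0 := fun h => by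
  simpa using congrArg Complex.re h


/-- `F` is a bijection from `{(z,t,r) ∈ ℂ*×ℝ×ℝ₊ : log r ≠ t/|z|²}` onto
`ℂ* × (ℂ \ ℝ)` with the stated inverse. -/
theorem Fmap_bijection :
    Set.BijOn Fmap Fdom Ftarget ∧ Set.InvOn FmapInv Fmap Fdom Ftarget := by
  have key : ∀ p ∈ Fdom, Fmap p ∈ Ftarget ∧ FmapInv (Fmap p) = p := by
    rintro ⟨z, t, r⟩ ⟨hz, hr, hL⟩
    have ha0 : 0 < ‖z‖ ^ 2 := by
      have := norm_pos_iff.mpr hz; positivity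
    set a := ‖z‖ ^ 2 with ha
    set L := Real.log r with hLdef
    have hd : (0:ℝ) < 1 + L^2 := by positivity
    have hne : a * L - t ≠ 0 := by
      intro h
      exact hL (by rw [eq_div_iff ha0.ne']; linarith)
    have hw2 : (Fmap (z, t, r)).2 = ((a:ℂ) - (t:ℂ)*I)/(1 - (L:ℂ)*I) := by
      simp only [Fmap, ha, hLdef]; push_cast; ring_nf
    have hw1 : (Fmap (z, t, r)).1 = z := rfl
    have him : (Fmap (z, t, r)).2.im = (a*L - t)/(1+L^2) := by rw [hw2, w_im']
    have hre : (Fmap (z, t, r)).2.re = (a + t*L)/(1+L^2) := by rw [hw2, w_re']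
    have habs : (‖(Fmap (z, t, r)).2‖)^2 = (a^2+t^2)/(1+L^2) := by
      rw [hw2, w_abs']
    have himne : (Fmap (z, t, r)).2.im ≠ 0 := by
      rw [him]; exact div_ne_zero hne hd.ne'
    refine ⟨⟨hz, himne⟩, ?_⟩
    simp only [FmapInv, hw1, hre, him, habs, Prod.mk.injEq, ← ha]
    refine ⟨trivial, ?_, ?_⟩
    · field_simp
      ring
    · rw [show ((a - (a + t*L)/(1+L^2)) / ((a*L - t)/(1+L^2))) = L by field_simp; ring,
        hLdef, Real.exp_log hr]
  have key2 : ∀ q ∈ Ftarget, FmapInv q ∈ Fdom ∧ Fmap (FmapInv q) = q := by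
    rintro ⟨ζ, w⟩ ⟨hζ, hv⟩
    have ha0 : 0 < ‖ζ‖ ^ 2 := by
      have := norm_pos_iff.mpr hζ; positivity
    set a := ‖ζ‖ ^ 2 with ha
    set u := w.re with hu
    set v := w.im with hvv
    have habsw : (‖w‖)^2 = u^2 + v^2 := by
      rw [Complex.sq_norm, Complex.normSq_apply]; ring
    have hinv : FmapInv (ζ, w) =
        (ζ, (u*a - (u^2+v^2))/v, Real.exp ((a - u)/v)) := by
      simp only [FmapInv, habsw, ← ha, ← hu, ← hvv]
    refine ⟨?_, ?_⟩
    · rw [hinv]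
      refine ⟨hζ, Real.exp_pos _, ?_⟩
      dsimp only
      rw [Real.log_exp]
      intro h
      rw [div_eq_div_iff hv ha0.ne', div_mul_cancel₀ _ hv] at h
      have hv2 : 0 < v^2 := by positivity
      nlinarith [sq_nonneg (a - u), hv2]
    · rw [hinv]
      have h2 : (Fmap (ζ, (u*a - (u^2+v^2))/v, Real.exp ((a - u)/v))).2 = w := by
        simp only [Fmap, Real.log_exp]
        rw [show ((‖(ζ, (u*a - (u^2+v^2))/v, Real.exp ((a - u)/v)).1‖ : ℝ):ℂ)^2
            = ((a:ℝ):ℂ) from by rw [ha]; push_cast; ring]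
        rw [div_eq_iff (denom_ne _)]
        simp only [Complex.ext_iff, Complex.mul_re, Complex.mul_im, Complex.sub_re,
          Complex.sub_im, Complex.one_re, Complex.one_im, Complex.ofReal_re,
          Complex.ofReal_im, Complex.mul_I_re, Complex.mul_I_im, Complex.I_re, Complex.I_im, ← hu, ← hvv]
        constructor <;> (field_simp; try ring)
      exact Prod.ext rfl h2
  have hmap : Set.MapsTo Fmap Fdom Ftarget := fun p hp => (key p hp).1
  have hmapinv : Set.MapsTo FmapInv Ftarget Fdom := fun q hq => (key2 q hq).1
  have hleft : Set.LeftInvOn FmapInv Fmap Fdom := fun p hp => (key p hp).2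
  have hright : Set.RightInvOn FmapInv Fmap Ftarget := fun q hq => (key2 q hq).2
  exact ⟨Set.InvOn.bijOn ⟨hleft, hright⟩ hmap hmapinv, hleft, hright⟩
end
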